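/- Let Z be a finite type, p : Z → ℝ with p i > 0 for all i, and ω : Z → Z → ℝ nonnegative and symmetric (ω i j = ω j i). Define T i j = tanh((f i - f j)/2) and r i j = (p i - p j)/(p i + p j). Then the density-weighted objective J(f) = Σ_{i,j} (T i j - r i j)^2 (p i + p j) ω i j equals 2 · Σ_{i,j} p i · ω i j · (T i j - 1)^2 plus a constant C independent of f, where C = Σ_{i,j} (p i - p j)^2/(p i + p j) · ω i j - 2 Σ_{i,j} p i · ω i j. -/
import Mathlib


open Finset in
theorem ctem_objective_reduction {Z : Type*} [Fintype Z]
    (p : Z → ℝ) (hp : ∀ i, 0 < p i)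
    (ω : Z → Z → ℝ) (hω : ∀ i j, 0 ≤ ω i j) (hωsymm : ∀ i j, ω i j = ω j i)
    (f : Z → ℝ) :
    (∑ i, ∑ j, (Real.tanh ((f i - f j) / 2) - (p i - p j) / (p i + p j)) ^ 2
        * (p i + p j) * ω i j)
      =
    2 * (∑ i, ∑ j, p i * ω i j * (Real.tanh ((f i - f j) / 2) - 1) ^ 2)
      + ((∑ i, ∑ j, (p i - p j) ^ 2 / (p i + p j) * ω i j)
          - 2 * ∑ i, ∑ j, p i * ω i j) := by
  set T : Z → Z → ℝ := fun i j => Real.tanh ((f i - f j) / 2) with hT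
  have hTanti : ∀ i j, T j i = - T i j := by
    intro i j
    have h : (f j - f i) / 2 = -((f i - f j) / 2) := by ring
    simp only [hT, h, Real.tanh_neg]
  have hs : ∀ i j, p i + p j ≠ 0 := by
    intro i j
    have := hp i; have := hp j
    positivity
  set g : Z → Z → ℝ := fun i j =>
    ((p j - p i) * T i j ^ 2 + 2 * (p i + p j) * T i j) * ω i j with hg
  have hganti : ∀ i j, g j i = - g i j := by
    intro i j
    simp only [hg, hTanti i j, hωsymm j i]
    ring
  have hgzero : (∑ i, ∑ j, g i j) = 0 := by
    have h1 : (∑ i, ∑ j, g i j) = - ∑ i, ∑ j, g i j := by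
      conv_lhs => rw [Finset.sum_comm]
      rw [← Finset.sum_neg_distrib]
      refine Finset.sum_congr rfl fun i _ => ?_
      rw [← Finset.sum_neg_distrib]
      exact Finset.sum_congr rfl fun j _ => hganti i j
    linarith
  have step1 : (∑ i, ∑ j, (T i j - (p i - p j) / (p i + p j)) ^ 2 * (p i + p j) * ω i j)
      = ∑ i, ∑ j, (2 * (p i * ω i j * (T i j - 1) ^ 2)
          + (p i - p j) ^ 2 / (p i + p j) * ω i j - 2 * (p i * ω i j) + g i j) := by
    refine Finset.sum_congr rfl fun i _ => Finset.sum_congr rfl fun j _ => ?_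
    have h := hs i j
    field_simp [hg]
    ring
  rw [step1]
  simp only [Finset.sum_add_distrib, Finset.sum_sub_distrib, hgzero, add_zero,
    ← Finset.mul_sum]
  simp only [hT]
  ring
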